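/- arXiv:1006.0318 — 2 statements merged into one kernel-verified Lean document; each statement's English description precedes it below -/
import Mathlib

section
/- Let G be a finite set of nonzero homogeneous polynomials and r_i, r_j, r_k, r_ℓ ∈ G be nonzero with lm(r_k) | lm(r_i) and lm(r_ℓ) | lm(r_j). Suppose r_i = λ_{ik} r_k + Σ_{u∈U} λ_u r_u and r_j = λ_{jℓ} r_ℓ + Σ_{v∈V} λ_v r_v are standard representations (with λ_{ik}, λ_{jℓ} monomials such that lm(r_i) = λ_{ik}·lm(r_k) > lm(λ_u r_u) and lm(r_j) = λ_{jℓ}·lm(r_ℓ) > lm(λ_v r_v)). Let γ_{ij} = lcm(lm(r_i), lm(r_j)) and γ_{kℓ} = lcm(lm(r_k), lm(r_ℓ)). Then γ_{kℓ} | γ_{ij}, and there exists a monomial λ with S(r_i,r_j) = λ·S(r_k,r_ℓ) + Σ_{w∈W} λ_w r_w where W = U ∪ V and γ_{ij} > lm(λ_w r_w) for all nonzero terms, and λ·γ_{kℓ} = γ_{ij}. -/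
open scoped MonomialOrder

namespace F5

variable {σ K : Type*} [Field K] (mo : MonomialOrder σ)

/-- leading monomial (exponent) of a polynomial w.r.t. a monomial order -/
noncomputable def lm (p : MvPolynomial σ K) : σ →₀ ℕ :=
  mo.toSyn.symm (p.support.sup fun d => mo.toSyn d)

/-- leading coefficient -/
noncomputable def lc (p : MvPolynomial σ K) : K := p.coeff (lm mo p)

/-- S-polynomial -/
noncomputable def Spoly (p q : MvPolynomial σ K) : MvPolynomial σ K :=
  MvPolynomial.monomial ((lm mo p ⊔ lm mo q) - lm mo p) (lc mo q) * p -
    MvPolynomial.monomial ((lm mo p ⊔ lm mo q) - lm mo q) (lc mo p) * q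

/-- standard representation of `p` w.r.t. the finite set `G` -/
def HasStdRep (G : Finset (MvPolynomial σ K)) (p : MvPolynomial σ K) : Prop :=
  p = 0 ∨ ∃ lam : MvPolynomial σ K → MvPolynomial σ K,
    p = ∑ g ∈ G, lam g * g ∧
    ∀ g ∈ G, lam g * g ≠ 0 → lm mo (lam g * g) ≼[mo] lm mo p

/-!
Writing `γ = lm rᵢ ⊔ lm rⱼ` and `γ' = lm rₖ ⊔ lm rₗ`, the exponent of each cofactor in
`S(rᵢ, rⱼ)` splits as `γ - lm rᵢ + λᵢₖ = (γ - γ') + (γ' - lm rₖ)`, so substituting the two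
standard representations turns the leading parts into `x^(γ - γ') · S(rₖ, rₗ)`. What is left is
`x^(γ - lm rᵢ) · Σ c_u r_u - x^(γ - lm rⱼ) · Σ d_v r_v`, and every term of it lies strictly
below `γ` because the tails of the representations lie strictly below `lm rᵢ` and `lm rⱼ`.
-/

open MvPolynomial

-- `lm` unfolds to `MonomialOrder.degree`, so Mathlib's degree API applies to it directly.

lemma forall_mem_support_lt_iff {p : MvPolynomial σ K} {T : σ →₀ ℕ} :
    (∀ e ∈ p.support, e ≺[mo] T) ↔ (p ≠ 0 → lm mo p ≺[mo] T) := by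
  refine ⟨fun h hp => h _ (mo.degree_mem_support hp), fun h e he => ?_⟩
  exact lt_of_le_of_lt (mo.le_degree he) (h (by rintro rfl; simp at he))

lemma lm_sub_lt {p q : MvPolynomial σ K} {T : σ →₀ ℕ}
    (hp : p ≠ 0 → lm mo p ≺[mo] T) (hq : q ≠ 0 → lm mo q ≺[mo] T) :
    p - q ≠ 0 → lm mo (p - q) ≺[mo] T := by
  classical
  rw [← forall_mem_support_lt_iff] at hp hq ⊢
  intro e he
  rcases Finset.mem_union.mp (support_sub σ p q he) with he | he
  exacts [hp e he, hq e he]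

lemma lm_monomial_one_mul_lt {p : MvPolynomial σ K} {a L : σ →₀ ℕ}
    (hp : p ≠ 0 → lm mo p ≺[mo] L) :
    monomial a 1 * p ≠ 0 → lm mo (monomial a 1 * p) ≺[mo] a + L := by
  intro hap
  have hp0 : p ≠ 0 := by rintro rfl; exact hap (mul_zero _)
  calc mo.toSyn (lm mo (monomial a 1 * p))
      ≤ mo.toSyn (mo.degree (monomial a (1 : K))) + mo.toSyn (lm mo p) := mo.toSyn_degree_mul_le
    _ ≤ mo.toSyn a + mo.toSyn (lm mo p) := by gcongr; exact mo.degree_monomial_le 1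
    _ < mo.toSyn a + mo.toSyn L := by gcongr; exact hp hp0
    _ = mo.toSyn (a + L) := (map_add _ _ _).symm

lemma lm_ite_mem_monomial_mul_lt [DecidableEq (MvPolynomial σ K)]
    {U : Finset (MvPolynomial σ K)} {c : MvPolynomial σ K → MvPolynomial σ K} {L T : σ →₀ ℕ}
    (hLT : L ≤ T) (hU : ∀ u ∈ U, c u * u ≠ 0 → lm mo (c u * u) ≺[mo] L) (g : MvPolynomial σ K) :
    (if g ∈ U then monomial (T - L) 1 * c g else 0) * g ≠ 0 →
      lm mo ((if g ∈ U then monomial (T - L) 1 * c g else 0) * g) ≺[mo] T := by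
  split_ifs with hg
  · rw [mul_assoc]
    simpa only [tsub_add_cancel_of_le hLT] using lm_monomial_one_mul_lt mo (a := T - L) (hU g hg)
  · simp

lemma sum_union_ite_sub_ite_mul {ι R : Type*} [DecidableEq ι] [CommRing R] (U V : Finset ι)
    (f c d : ι → R) (a b : R) :
    ∑ g ∈ U ∪ V, ((if g ∈ U then a * c g else 0) - (if g ∈ V then b * d g else 0)) * f g =
      a * ∑ u ∈ U, c u * f u - b * ∑ v ∈ V, d v * f v := by
  simp only [sub_mul, ite_mul, zero_mul, Finset.sum_sub_distrib, Finset.sum_ite_mem,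
    Finset.union_inter_cancel_left, Finset.union_inter_cancel_right, Finset.mul_sum, mul_assoc]

lemma monomial_one_mul_eq_of_eq_add {p p' t : MvPolynomial σ K} {a b s l : σ →₀ ℕ}
    (hp : p = monomial s 1 * p' + t) (h : a + s = l + b) :
    monomial a 1 * p = monomial l 1 * (monomial b 1 * p') + monomial a 1 * t := by
  rw [hp, mul_add, ← mul_assoc, ← mul_assoc, monomial_mul, monomial_mul, mul_one, h]

lemma sup_tsub_add_eq {a a₀ b b₀ s : σ →₀ ℕ} (ha : a = s + a₀) (hb : b₀ ≤ b) :
    (a ⊔ b - a) + s = (a ⊔ b - a₀ ⊔ b₀) + (a₀ ⊔ b₀ - a₀) := by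
  have ha₀ : a₀ ≤ a := ha ▸ le_add_self
  have hs : s = a - a₀ := by rw [ha, add_tsub_cancel_right]
  rw [hs, tsub_add_tsub_cancel le_sup_left ha₀,
    tsub_add_tsub_cancel (sup_le_sup ha₀ hb) le_sup_left]

theorem spoly_eq_monomial_mul_spoly_add {p q p' q' tp tq : MvPolynomial σ K} {s t : σ →₀ ℕ}
    (hp1 : lc mo p = 1) (hq1 : lc mo q = 1) (hp'1 : lc mo p' = 1) (hq'1 : lc mo q' = 1)
    (hlp : lm mo p = s + lm mo p') (hlq : lm mo q = t + lm mo q')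
    (hp : p = monomial s 1 * p' + tp) (hq : q = monomial t 1 * q' + tq) :
    Spoly mo p q =
      monomial (lm mo p ⊔ lm mo q - lm mo p' ⊔ lm mo q') 1 * Spoly mo p' q' +
        (monomial (lm mo p ⊔ lm mo q - lm mo p) 1 * tp -
          monomial (lm mo p ⊔ lm mo q - lm mo q) 1 * tq) := by
  have hp'p : lm mo p' ≤ lm mo p := hlp ▸ le_add_self
  have hq'q : lm mo q' ≤ lm mo q := hlq ▸ le_add_self
  have ep := sup_tsub_add_eq hlp hq'q
  have eq := sup_tsub_add_eq hlq hp'p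
  rw [sup_comm (lm mo q), sup_comm (lm mo q')] at eq
  rw [Spoly, Spoly, hp1, hq1, hp'1, hq'1, monomial_one_mul_eq_of_eq_add hp ep,
    monomial_one_mul_eq_of_eq_add hq eq]
  ring

theorem f5_critical_pair_rewriting_general {n : ℕ} (mo : MonomialOrder (Fin n)) {K : Type*} [Field K]
    [DecidableEq (MvPolynomial (Fin n) K)]
    (ri rj rk rl : MvPolynomial (Fin n) K)
    (hmonic : lc mo ri = 1 ∧ lc mo rj = 1 ∧ lc mo rk = 1 ∧ lc mo rl = 1)
    (lamik lamjl : Fin n →₀ ℕ)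
    (U V : Finset (MvPolynomial (Fin n) K))
    (c d : MvPolynomial (Fin n) K → MvPolynomial (Fin n) K)
    (hlmik : lm mo ri = lamik + lm mo rk)
    (hlmjl : lm mo rj = lamjl + lm mo rl)
    (hrepi : ri = MvPolynomial.monomial lamik (1 : K) * rk + ∑ u ∈ U, c u * u)
    (hrepj : rj = MvPolynomial.monomial lamjl (1 : K) * rl + ∑ v ∈ V, d v * v)
    (hUlt : ∀ u ∈ U, c u * u ≠ 0 → (lm mo (c u * u) ≺[mo] lm mo ri))
    (hVlt : ∀ v ∈ V, d v * v ≠ 0 → (lm mo (d v * v) ≺[mo] lm mo rj)) :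
    (lm mo rk ⊔ lm mo rl) ≤ (lm mo ri ⊔ lm mo rj) ∧
    ∃ lam : Fin n →₀ ℕ, lam + (lm mo rk ⊔ lm mo rl) = lm mo ri ⊔ lm mo rj ∧
      ∃ w : MvPolynomial (Fin n) K → MvPolynomial (Fin n) K,
        Spoly mo ri rj =
          MvPolynomial.monomial lam (1 : K) * Spoly mo rk rl + ∑ g ∈ U ∪ V, w g * g ∧
        ∀ g ∈ U ∪ V, w g * g ≠ 0 → (lm mo (w g * g) ≺[mo] (lm mo ri ⊔ lm mo rj)) := by
  obtain ⟨hi1, hj1, hk1, hl1⟩ := hmonic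
  set γ := lm mo ri ⊔ lm mo rj
  have hγ : lm mo rk ⊔ lm mo rl ≤ γ := sup_le_sup (hlmik ▸ le_add_self) (hlmjl ▸ le_add_self)
  refine ⟨hγ, _, tsub_add_cancel_of_le hγ,
    fun g => (if g ∈ U then monomial (γ - lm mo ri) 1 * c g else 0) -
      (if g ∈ V then monomial (γ - lm mo rj) 1 * d g else 0), ?_, ?_⟩
  · rw [sum_union_ite_sub_ite_mul,
      spoly_eq_monomial_mul_spoly_add mo hi1 hj1 hk1 hl1 hlmik hlmjl hrepi hrepj]
  · intro g _
    rw [sub_mul]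
    exact lm_sub_lt mo (lm_ite_mem_monomial_mul_lt mo le_sup_left hUlt g)
      (lm_ite_mem_monomial_mul_lt mo le_sup_right hVlt g)

/-- Computational core of the F5-critical-pair rewriting theorem: if `r_i` and
`r_j` have standard representations led by monomial multiples of `r_k` and `r_ℓ`
respectively, then `γ_{kℓ} ∣ γ_{ij}` and
`S(r_i, r_j) = λ · S(r_k, r_ℓ) + ∑_{w ∈ U ∪ V} λ_w r_w`
with `λ · γ_{kℓ} = γ_{ij}` and `lm (λ_w r_w) ≺ γ_{ij}` for all nonzero terms. -/
theorem f5_critical_pair_rewriting {n : ℕ} (mo : MonomialOrder (Fin n)) {K : Type*} [Field K]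
    [DecidableEq (MvPolynomial (Fin n) K)]
    (G : Finset (MvPolynomial (Fin n) K))
    (hG0 : ∀ g ∈ G, g ≠ 0) (hGhom : ∀ g ∈ G, ∃ d, g.IsHomogeneous d)
    (ri rj rk rl : MvPolynomial (Fin n) K)
    (hiG : ri ∈ G) (hjG : rj ∈ G) (hkG : rk ∈ G) (hlG : rl ∈ G)
    (hmonic : lc mo ri = 1 ∧ lc mo rj = 1 ∧ lc mo rk = 1 ∧ lc mo rl = 1)
    (lamik lamjl : Fin n →₀ ℕ)
    (U V : Finset (MvPolynomial (Fin n) K)) (hU : U ⊆ G) (hV : V ⊆ G)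
    (c d : MvPolynomial (Fin n) K → MvPolynomial (Fin n) K)
    (hlmik : lm mo ri = lamik + lm mo rk)
    (hlmjl : lm mo rj = lamjl + lm mo rl)
    (hrepi : ri = MvPolynomial.monomial lamik (1 : K) * rk + ∑ u ∈ U, c u * u)
    (hrepj : rj = MvPolynomial.monomial lamjl (1 : K) * rl + ∑ v ∈ V, d v * v)
    (hUlt : ∀ u ∈ U, c u * u ≠ 0 → (lm mo (c u * u) ≺[mo] lm mo ri))
    (hVlt : ∀ v ∈ V, d v * v ≠ 0 → (lm mo (d v * v) ≺[mo] lm mo rj)) :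
    (lm mo rk ⊔ lm mo rl) ≤ (lm mo ri ⊔ lm mo rj) ∧
    ∃ lam : Fin n →₀ ℕ, lam + (lm mo rk ⊔ lm mo rl) = lm mo ri ⊔ lm mo rj ∧
      ∃ w : MvPolynomial (Fin n) K → MvPolynomial (Fin n) K,
        Spoly mo ri rj =
          MvPolynomial.monomial lam (1 : K) * Spoly mo rk rl + ∑ g ∈ U ∪ V, w g * g ∧
        ∀ g ∈ U ∪ V, w g * g ≠ 0 → (lm mo (w g * g) ≺[mo] (lm mo ri ⊔ lm mo rj)) :=
  f5_critical_pair_rewriting_general mo ri rj rk rl hmonic lamik lamjl U V c d hlmik hlmjl hrepi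
    hrepj hUlt hVlt
end F5
end

section
/- Let I be a homogeneous ideal of R generated by homogeneous f_1,…,f_m, and let G ⊇ {f_1,…,f_m} be a finite set of homogeneous polynomials contained in I. If for every pair p, q ∈ G with deg(S(p,q)) ≤ d, the S-polynomial S(p,q) has a standard representation with respect to G, then for every homogeneous h ∈ I with deg(h) ≤ d, the leading monomial lm(h) is divisible by lm(g) for some g ∈ G (i.e., G is a d-Gröbner basis of I). -/
/-! Write the homogeneous `h ∈ I` of degree `e ≤ d` as `∑ c g * g` over `G` with every term
homogeneous of degree `e`. As long as the largest leading monomial `δ` of the terms exceeds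
`lm h`, the leading parts of the terms of leading monomial `δ` cancel, so they form a combination
of S-polynomials `S(p, q)` with `lcm(lm p, lm q) ∣ δ`; these have degree `≤ d`, and their standard
representations push every term strictly below `δ`. Since the order refines the degree, all terms
stay in degree `≤ d`, and by well-foundedness this ends in a standard representation of `h`,
whose term carrying `lm h` gives `lm g ∣ lm h`. -/

open scoped MonomialOrder

namespace F5

variable {σ K : Type*} [Field K] (mo : MonomialOrder σ)

open MvPolynomial MonomialOrder

lemma spoly_eq_sPolynomial (p q : MvPolynomial σ K) : Spoly mo p q = mo.sPolynomial p q := by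
  rw [sPolynomial_def]
  rfl

lemma degree_le_of_toSyn_le (hdeg : ∀ a b : σ →₀ ℕ, a.degree < b.degree → a ≺[mo] b)
    {a b : σ →₀ ℕ} (h : a ≼[mo] b) : a.degree ≤ b.degree := by
  contrapose! h
  exact hdeg _ _ h

section Homogeneous

variable {R : Type*} [CommSemiring R]

attribute [local instance] MvPolynomial.gradedAlgebra in
lemma exists_homogeneousComponent_mul_eq {g : MvPolynomial σ R} {i : ℕ}
    (hg : g.IsHomogeneous i) (p : MvPolynomial σ R) (n : ℕ) :
    ∃ q, homogeneousComponent n (p * g) = q * g := by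
  classical
  have hcomp (φ : MvPolynomial σ R) (j : ℕ) :
      (DirectSum.decompose (homogeneousSubmodule σ R) φ j : MvPolynomial σ R) =
        homogeneousComponent j φ :=
    decomposition.decompose'_apply φ j
  have := DirectSum.coe_decompose_mul_of_right_mem (homogeneousSubmodule σ R) n (a := p) hg
  rw [hcomp, hcomp] at this
  rw [this]
  split_ifs
  · exact ⟨_, rfl⟩
  · exact ⟨0, (zero_mul g).symm⟩

lemma exists_sum_mul_isHomogeneous_of_mem_span {G : Finset (MvPolynomial σ R)}
    (hG : ∀ g ∈ G, ∃ i, g.IsHomogeneous i) {h : MvPolynomial σ R} {e : ℕ}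
    (hmem : h ∈ Ideal.span (G : Set (MvPolynomial σ R))) (hh : h.IsHomogeneous e) :
    ∃ c : MvPolynomial σ R → MvPolynomial σ R,
      h = ∑ g ∈ G, c g * g ∧ ∀ g ∈ G, (c g * g).IsHomogeneous e := by
  obtain ⟨a, -, rfl⟩ := Submodule.mem_span_finset.mp hmem
  have hcomp (g) (hg : g ∈ G) : ∃ q, homogeneousComponent e (a g * g) = q * g :=
    exists_homogeneousComponent_mul_eq (hG g hg).choose_spec _ _
  choose! c hc using hcomp
  refine ⟨c, ?_, fun g hg => hc g hg ▸ homogeneousComponent_isHomogeneous e _⟩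
  rw [← homogeneousComponent_eq_self hh, map_sum]
  exact Finset.sum_congr rfl fun g hg => hc g hg

lemma degree_degree_le_of_isHomogeneous {p : MvPolynomial σ R} {e : ℕ}
    (hp : p.IsHomogeneous e) : (mo.degree p).degree ≤ e := by
  by_cases hp0 : p = 0
  · simp [hp0]
  rw [Finsupp.degree_eq_weight_one]
  exact (hp (mo.coeff_degree_ne_zero_iff.mpr hp0)).le

end Homogeneous

section Representations

variable {R : Type*} [CommSemiring R] {mo} {G : Finset (MvPolynomial σ R)} {δ : σ →₀ ℕ}

variable (mo) in
/-- As `mo.degree 0 = 0`, vanishing terms are allowed only when `0 ≺[mo] δ`. -/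
def HasRepBelow (G : Finset (MvPolynomial σ R)) (δ : σ →₀ ℕ) (p : MvPolynomial σ R) : Prop :=
  ∃ μ : MvPolynomial σ R → MvPolynomial σ R,
    p = ∑ g ∈ G, μ g * g ∧ ∀ g ∈ G, mo.degree (μ g * g) ≺[mo] δ

lemma HasRepBelow.zero (hδ : 0 ≺[mo] δ) : HasRepBelow mo G δ 0 :=
  ⟨0, by simp, fun g _ => by simpa using hδ⟩

lemma HasRepBelow.add {p q : MvPolynomial σ R} (hp : HasRepBelow mo G δ p)
    (hq : HasRepBelow mo G δ q) : HasRepBelow mo G δ (p + q) := by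
  obtain ⟨μ, rfl, hμ⟩ := hp
  obtain ⟨ν, rfl, hν⟩ := hq
  refine ⟨μ + ν, by simp [add_mul, Finset.sum_add_distrib], fun g hg => ?_⟩
  rw [Pi.add_apply, add_mul]
  exact degree_add_le.trans_lt (max_lt (hμ g hg) (hν g hg))

lemma HasRepBelow.smul (c : R) {p : MvPolynomial σ R} (hp : HasRepBelow mo G δ p) :
    HasRepBelow mo G δ (c • p) := by
  obtain ⟨μ, rfl, hμ⟩ := hp
  refine ⟨c • μ, by simp [Finset.smul_sum], fun g hg => ?_⟩
  rw [Pi.smul_apply, smul_mul_assoc]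
  exact degree_smul_le.trans_lt (hμ g hg)

lemma HasRepBelow.sum {ι : Type*} {s : Finset ι} {p : ι → MvPolynomial σ R}
    (hδ : 0 ≺[mo] δ) (hp : ∀ i ∈ s, HasRepBelow mo G δ (p i)) :
    HasRepBelow mo G δ (∑ i ∈ s, p i) :=
  Finset.sum_induction _ _ (fun _ _ => HasRepBelow.add) (HasRepBelow.zero hδ) hp

lemma HasRepBelow.monomial_mul (a : σ →₀ ℕ) (c : R) {p : MvPolynomial σ R}
    (hp : HasRepBelow mo G δ p) : HasRepBelow mo G (a + δ) (monomial a c * p) := by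
  obtain ⟨μ, rfl, hμ⟩ := hp
  refine ⟨fun g => monomial a c * μ g, by simp [Finset.mul_sum, mul_assoc], fun g hg => ?_⟩
  calc mo.toSyn (mo.degree (monomial a c * μ g * g))
      ≤ mo.toSyn a + mo.toSyn (mo.degree (μ g * g)) := by
        rw [mul_assoc]
        refine degree_mul_le.trans ?_
        rw [map_add]
        exact add_le_add_left (mo.degree_monomial_le c) _
    _ < mo.toSyn (a + δ) := by
        rw [map_add]
        exact add_lt_add_right (hμ g hg) _

lemma HasRepBelow.degree_lt {p : MvPolynomial σ R} (hp : HasRepBelow mo G δ p)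
    (hδ : 0 ≺[mo] δ) : mo.degree p ≺[mo] δ := by
  obtain ⟨μ, rfl, hμ⟩ := hp
  exact degree_sum_le.trans_lt ((Finset.sup_lt_iff (by simpa using hδ)).mpr hμ)

end Representations

lemma degree_sub_leadingTerm_mul_lt {R : Type*} [CommRing R] [NoZeroDivisors R]
    {p q : MvPolynomial σ R} (h : 0 ≺[mo] mo.degree (p * q)) :
    mo.degree ((p - mo.leadingTerm p) * q) ≺[mo] mo.degree (p * q) := by
  by_cases hp : p - mo.leadingTerm p = 0
  · simpa [hp] using h
  by_cases hq : q = 0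
  · simp [hq] at h
  rw [degree_mul_lt_iff_left_lt_of_ne_zero hp hq]
  exact degree_sub_leadingTerm_lt_degree (degree_ne_zero_of_sub_leadingTerm_ne_zero hp)

section StandardRepresentation

variable {mo} {G : Finset (MvPolynomial σ K)} {δ : σ →₀ ℕ}

lemma HasStdRep.hasRepBelow {p : MvPolynomial σ K} (hp : HasStdRep mo G p)
    (hδ : 0 ≺[mo] δ) (hpδ : mo.degree p ≺[mo] δ) : HasRepBelow mo G δ p := by
  obtain rfl | ⟨μ, hrep, hμ⟩ := hp
  · exact .zero hδ
  refine ⟨μ, hrep, fun g hg => ?_⟩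
  by_cases h0 : μ g * g = 0
  · simpa [h0] using hδ
  · exact (hμ g hg h0).trans_lt hpδ

lemma hasRepBelow_monomial_mul_sPolynomial {p q : MvPolynomial σ K}
    (hS : HasStdRep mo G (mo.sPolynomial p q)) (hδ : 0 ≺[mo] δ)
    (hpq : mo.degree p ⊔ mo.degree q ≤ δ) (c : K) :
    HasRepBelow mo G δ (monomial (δ - mo.degree p ⊔ mo.degree q) c * mo.sPolynomial p q) := by
  rcases mo.degree_sPolynomial p q with hlt | h0
  · have h0lt : 0 ≺[mo] mo.degree p ⊔ mo.degree q := lt_of_le_of_lt (by simp) hlt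
    simpa only [tsub_add_cancel_of_le hpq] using
      (hS.hasRepBelow h0lt hlt).monomial_mul (δ - mo.degree p ⊔ mo.degree q) c
  · rw [h0, mul_zero]
    exact .zero hδ

variable (mo) in
def SPolysHaveStdRep (G : Finset (MvPolynomial σ K)) (d : ℕ) : Prop :=
  ∀ p ∈ G, ∀ q ∈ G,
    (mo.degree p ⊔ mo.degree q).degree ≤ d → HasStdRep mo G (mo.sPolynomial p q)

variable {d : ℕ}

lemma hasRepBelow_sPolynomial_leadingTerm_mul (hspol : SPolysHaveStdRep mo G d)
    (hδ : 0 ≺[mo] δ) (hδd : δ.degree ≤ d) {a b p q : MvPolynomial σ K} (hp : p ∈ G) (hq : q ∈ G)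
    (ha : mo.degree (a * p) = δ) (hb : mo.degree (b * q) = δ) :
    HasRepBelow mo G δ (mo.sPolynomial (mo.leadingTerm a * p) (mo.leadingTerm b * q)) := by
  have degree_le {x y : MvPolynomial σ K} (h : mo.degree (x * y) = δ) : mo.degree y ≤ δ := by
    have hxy : x * y ≠ 0 := by
      rintro h0
      simp [h0, ← h] at hδ
    rw [← h, degree_mul (left_ne_zero_of_mul hxy) (right_ne_zero_of_mul hxy)]
    exact le_add_self
  have hpq : mo.degree p ⊔ mo.degree q ≤ δ := sup_le (degree_le ha) (degree_le hb)
  rw [sPolynomial_leadingTerm_mul', ha, hb, sup_idem]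
  exact hasRepBelow_monomial_mul_sPolynomial
    (hspol p hp q hq ((Finsupp.degree_mono hpq).trans hδd)) hδ hpq _

lemma hasRepBelow_of_rep (hspol : SPolysHaveStdRep mo G d) (hδd : δ.degree ≤ d)
    {h : MvPolynomial σ K} {c : MvPolynomial σ K → MvPolynomial σ K}
    (hrep : h = ∑ g ∈ G, c g * g) (hc : ∀ g ∈ G, mo.degree (c g * g) ≼[mo] δ)
    (hh : mo.degree h ≺[mo] δ) : HasRepBelow mo G δ h := by
  classical
  have hδ : 0 ≺[mo] δ := lt_of_le_of_lt (by simp) hh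
  set top : MvPolynomial σ K → MvPolynomial σ K :=
    fun g => if mo.degree (c g * g) = δ then mo.leadingTerm (c g) else 0
  have hrest : HasRepBelow mo G δ (∑ g ∈ G, (c g - top g) * g) := by
    refine ⟨_, rfl, fun g hg => ?_⟩
    by_cases hgδ : mo.degree (c g * g) = δ
    · have hlt := degree_sub_leadingTerm_mul_lt mo (hgδ ▸ hδ)
      simpa [top, hgδ] using hlt
    · simpa [top, hgδ] using lt_of_le_of_ne (hc g hg) (mo.toSyn.injective.ne hgδ)
  have hsplit : h = ∑ g ∈ G, (c g - top g) * g + ∑ g ∈ G, top g * g := by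
    rw [hrep, ← Finset.sum_add_distrib]
    exact Finset.sum_congr rfl fun g _ => by ring
  have htop : mo.degree (∑ g ∈ G, top g * g) ≺[mo] δ := by
    rw [eq_sub_of_add_eq' hsplit.symm]
    exact degree_sub_le.trans_lt (max_lt hh (hrest.degree_lt hδ))
  obtain ⟨a, ha⟩ := mo.sPolynomial_decomposition' (fun g => top g * g) (B := G)
    (fun g _ => by by_cases hgδ : mo.degree (c g * g) = δ <;> simp [top, hgδ]) htop
  rw [hsplit, ha]
  refine hrest.add (.sum hδ fun p hp => .sum hδ fun q hq => .smul _ ?_)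
  simp only [top]
  split_ifs with hpδ hqδ
  · exact hasRepBelow_sPolynomial_leadingTerm_mul hspol hδ hδd hp hq hpδ hqδ
  all_goals simpa using .zero hδ

theorem hasStdRep_of_rep (hdeg : ∀ a b : σ →₀ ℕ, a.degree < b.degree → a ≺[mo] b)
    (hspol : SPolysHaveStdRep mo G d) {h : MvPolynomial σ K}
    {c : MvPolynomial σ K → MvPolynomial σ K} (hrep : h = ∑ g ∈ G, c g * g)
    (hc : ∀ g ∈ G, (mo.degree (c g * g)).degree ≤ d) : HasStdRep mo G h := by
  generalize hδ : G.sup (fun g => mo.toSyn (mo.degree (c g * g))) = δ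
  induction δ using WellFoundedLT.induction generalizing c with
  | _ δ ih =>
  have hsup (g) (hg : g ∈ G) : mo.toSyn (mo.degree (c g * g)) ≤ δ :=
    hδ ▸ Finset.le_sup (f := fun g => mo.toSyn (mo.degree (c g * g))) hg
  by_cases hle : δ ≤ mo.toSyn (mo.degree h)
  · exact .inr ⟨c, hrep, fun g hg _ => (hsup g hg).trans hle⟩
  push Not at hle
  have hG : G.Nonempty := Finset.nonempty_iff_ne_empty.mpr <| by
    rintro rfl
    simp only [Finset.sup_empty] at hδ
    exact lt_irrefl _ (hle.trans_le (hδ ▸ bot_le))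
  obtain ⟨g₀, hg₀, hδg₀⟩ := Finset.exists_mem_eq_sup G hG fun g => mo.toSyn (mo.degree (c g * g))
  rw [hδ] at hδg₀
  obtain ⟨μ, hμ, hμδ⟩ := hasRepBelow_of_rep hspol (hc g₀ hg₀) hrep
    (fun g hg => hδg₀ ▸ hsup g hg) (hδg₀ ▸ hle)
  refine ih _ ?_ hμ
    (fun g hg => (degree_le_of_toSyn_le mo hdeg (hμδ g hg).le).trans (hc g₀ hg₀)) rfl
  exact (Finset.sup_lt_iff (bot_le.trans_lt hle)).mpr fun g hg => hδg₀ ▸ hμδ g hg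

lemma HasStdRep.exists_degree_le {h : MvPolynomial σ K} (hstd : HasStdRep mo G h) (hh : h ≠ 0) :
    ∃ g ∈ G, g ≠ 0 ∧ mo.degree g ≤ mo.degree h := by
  obtain h0 | ⟨c, hrep, hc⟩ := hstd
  · exact absurd h0 hh
  have hsum : ∑ g ∈ G, (c g * g).coeff (mo.degree h) ≠ 0 := by
    rw [← coeff_sum, ← hrep]
    exact mo.coeff_degree_ne_zero_iff.mpr hh
  obtain ⟨g, hg, hcoeff⟩ := Finset.exists_ne_zero_of_sum_ne_zero hsum
  have hcg : c g * g ≠ 0 := by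
    rintro h0
    simp [h0] at hcoeff
  have heq : mo.degree (c g * g) = mo.degree h :=
    mo.toSyn.injective (le_antisymm (hc g hg hcg) (mo.le_degree (mem_support_iff.mpr hcoeff)))
  refine ⟨g, hg, right_ne_zero_of_mul hcg, ?_⟩
  rw [← heq, degree_mul (left_ne_zero_of_mul hcg) (right_ne_zero_of_mul hcg)]
  exact le_add_self

end StandardRepresentation

theorem dGroebner_of_spolys_general {n mnum : ℕ} (mo : MonomialOrder (Fin n)) {K : Type*} [Field K]
    (hdeg : ∀ a b : Fin n →₀ ℕ, Finsupp.degree a < Finsupp.degree b → (a ≺[mo] b))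
    (f : Fin mnum → MvPolynomial (Fin n) K)
    (G : Finset (MvPolynomial (Fin n) K))
    (hfG : ∀ i, f i ∈ G)
    (hGhom : ∀ g ∈ G, ∃ e, g.IsHomogeneous e)
    (d : ℕ)
    (hspol : ∀ p ∈ G, ∀ q ∈ G,
      Finsupp.degree (lm mo p ⊔ lm mo q) ≤ d → HasStdRep mo G (Spoly mo p q)) :
    ∀ (h : MvPolynomial (Fin n) K) (e : ℕ), h ∈ Ideal.span (Set.range f) → h ≠ 0 →
      h.IsHomogeneous e → e ≤ d → ∃ g ∈ G, g ≠ 0 ∧ lm mo g ≤ lm mo h := by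
  intro h e hmem hne hhom hed
  obtain ⟨c, hrep, hc⟩ := exists_sum_mul_isHomogeneous_of_mem_span hGhom
    (Ideal.span_mono (Set.range_subset_iff.mpr hfG) hmem) hhom
  have hspol' : SPolysHaveStdRep mo G d := fun p hp q hq hpq => by
    simpa only [spoly_eq_sPolynomial] using hspol p hp q hq hpq
  have hstd : HasStdRep mo G h := hasStdRep_of_rep hdeg hspol' hrep
    fun g hg => (degree_degree_le_of_isHomogeneous mo (hc g hg)).trans hed
  exact hstd.exists_degree_le hne

/-- `d`-Gröbner basis criterion: for a homogeneous ideal `I = ⟨f 0, …, f (mnum-1)⟩`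
and a finite set `G ⊆ I` of homogeneous polynomials containing the `f i`, if every
S-polynomial of elements of `G` of degree `≤ d` has a standard representation
w.r.t. `G`, then every nonzero homogeneous `h ∈ I` of degree `≤ d` has its leading
monomial divisible by the leading monomial of some element of `G`.
The monomial order is assumed to refine the total degree. -/
theorem dGroebner_of_spolys {n mnum : ℕ} (mo : MonomialOrder (Fin n)) {K : Type*} [Field K]
    (hdeg : ∀ a b : Fin n →₀ ℕ, Finsupp.degree a < Finsupp.degree b → (a ≺[mo] b))
    (f : Fin mnum → MvPolynomial (Fin n) K) (df : Fin mnum → ℕ)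
    (hf : ∀ i, (f i).IsHomogeneous (df i))
    (G : Finset (MvPolynomial (Fin n) K))
    (hGI : (↑G : Set (MvPolynomial (Fin n) K)) ⊆ Ideal.span (Set.range f))
    (hfG : ∀ i, f i ∈ G)
    (hGhom : ∀ g ∈ G, ∃ e, g.IsHomogeneous e)
    (d : ℕ)
    (hspol : ∀ p ∈ G, ∀ q ∈ G,
      Finsupp.degree (lm mo p ⊔ lm mo q) ≤ d → HasStdRep mo G (Spoly mo p q)) :
    ∀ (h : MvPolynomial (Fin n) K) (e : ℕ), h ∈ Ideal.span (Set.range f) → h ≠ 0 →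
      h.IsHomogeneous e → e ≤ d → ∃ g ∈ G, g ≠ 0 ∧ lm mo g ≤ lm mo h :=
  dGroebner_of_spolys_general mo hdeg f G hfG hGhom d hspol
end F5
end
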